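/- Let T : U → Y be bounded, linear, injective between Hilbert spaces, U_n ⊂ U a finite-dimensional subspace, and Y_n = T(U_n). Then the minimum-norm solution of T P_{U_n} u = y for y ∈ T(U) is (T P_{U_n})† y = T⁻¹ P_{Y_n} y, i.e. the Moore–Penrose inverse of T P_{U_n} applied to y equals T⁻¹ composed with the orthogonal projection onto Y_n. -/

import Mathlib

/-!
Every `T (P_{Uₙ} x)` lies in `Yₙ`, and for `z ∈ Yₙ` Pythagoras gives
`‖z - y‖² = ‖z - P_{Yₙ} y‖² + ‖P_{Yₙ} y - y‖²`. Hence `T x₀ = P_{Yₙ} y` has the smallest residual,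
and any `x` attaining it has `T (P_{Uₙ} x) = T x₀`, so `P_{Uₙ} x = x₀` by injectivity and
`‖x₀‖ = ‖P_{Uₙ} x‖ ≤ ‖x‖`.
-/

open scoped InnerProductSpace

namespace Submodule

variable {𝕜 E : Type*} [RCLike 𝕜] [NormedAddCommGroup E] [InnerProductSpace 𝕜 E]
  {K : Submodule 𝕜 E} [K.HasOrthogonalProjection]

theorem norm_sub_sq_eq_norm_sub_starProjection_sq_add {z : E} (hz : z ∈ K) (y : E) :
    ‖z - y‖ ^ 2 = ‖z - K.starProjection y‖ ^ 2 + ‖K.starProjection y - y‖ ^ 2 := by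
  have horth : ⟪z - K.starProjection y, K.starProjection y - y⟫_𝕜 = 0 := by
    rw [← neg_sub y, inner_neg_right, neg_eq_zero]
    exact K.inner_right_of_mem_orthogonal (K.sub_mem hz (K.starProjection_apply_mem y))
      (K.sub_starProjection_mem_orthogonal y)
  rw [← sub_add_sub_cancel z (K.starProjection y) y, sq, sq, sq,
    norm_add_sq_eq_norm_sq_add_norm_sq_of_inner_eq_zero _ _ horth]

theorem norm_starProjection_sub_le {z : E} (hz : z ∈ K) (y : E) :
    ‖K.starProjection y - y‖ ≤ ‖z - y‖ := by
  refine (pow_le_pow_iff_left₀ (norm_nonneg _) (norm_nonneg _) two_ne_zero).mp ?_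
  rw [norm_sub_sq_eq_norm_sub_starProjection_sq_add hz y]
  exact le_add_of_nonneg_left (sq_nonneg _)

theorem eq_starProjection_of_norm_sub_eq {z : E} (hz : z ∈ K) {y : E}
    (h : ‖z - y‖ = ‖K.starProjection y - y‖) : z = K.starProjection y := by
  have := norm_sub_sq_eq_norm_sub_starProjection_sq_add hz y
  rw [h, right_eq_add, sq_eq_zero_iff, norm_sub_eq_zero_iff] at this
  exact this

end Submodule

theorem moore_penrose_eq_Tinv_proj_general
    {U Y : Type*} [NormedAddCommGroup U] [InnerProductSpace ℝ U]
    [NormedAddCommGroup Y] [InnerProductSpace ℝ Y]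
    (T : U →L[ℝ] Y) (hT : Function.Injective T)
    (Un : Submodule ℝ U) [Submodule.HasOrthogonalProjection Un]
    (Yn : Submodule ℝ Y) (hYn : Yn = Submodule.map (T : U →ₗ[ℝ] Y) Un)
    [Submodule.HasOrthogonalProjection Yn]
    (y : Y)
    (x₀ : U) (hTx₀ : T x₀ = (Submodule.orthogonalProjectionOnto Yn y : Y)) :
    (∀ x : U, ‖T x₀ - y‖ ≤ ‖T (Submodule.orthogonalProjectionOnto Un x : U) - y‖) ∧
    (∀ x : U, ‖T (Submodule.orthogonalProjectionOnto Un x : U) - y‖ = ‖T x₀ - y‖ → ‖x₀‖ ≤ ‖x‖) := by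
  have hmem (x : U) : T (Un.orthogonalProjectionOnto x : U) ∈ Yn :=
    hYn ▸ Submodule.mem_map_of_mem (Un.orthogonalProjectionOnto x).2
  rw [hTx₀, ← Submodule.starProjection_apply]
  refine ⟨fun x => Submodule.norm_starProjection_sub_le (hmem x) y, fun x hx => ?_⟩
  have hproj : (Un.orthogonalProjectionOnto x : U) = x₀ :=
    hT (hTx₀ ▸ Submodule.eq_starProjection_of_norm_sub_eq (hmem x) hx)
  exact hproj ▸ Un.norm_orthogonalProjectionOnto_apply_le x

/-- Let `T : U → Y` be bounded, linear, injective, `Uₙ ⊂ U` finite-dimensional,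
`Yₙ = T(Uₙ)`.  For `y ∈ T(U)`, the minimum-norm solution of `T P_{Uₙ} u = y`,
i.e. the Moore–Penrose inverse `(T P_{Uₙ})† y`, equals `T⁻¹ P_{Yₙ} y`: the
(unique) element `x₀ ∈ Uₙ` with `T x₀ = P_{Yₙ} y` minimizes the residual
`‖T P_{Uₙ} x − y‖` over all `x`, and has minimal norm among all minimizers. -/
theorem moore_penrose_eq_Tinv_proj
    {U Y : Type*} [NormedAddCommGroup U] [InnerProductSpace ℝ U] [CompleteSpace U]
    [NormedAddCommGroup Y] [InnerProductSpace ℝ Y] [CompleteSpace Y]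
    (T : U →L[ℝ] Y) (hT : Function.Injective T)
    (Un : Submodule ℝ U) [FiniteDimensional ℝ Un] [Submodule.HasOrthogonalProjection Un]
    (Yn : Submodule ℝ Y) (hYn : Yn = Submodule.map (T : U →ₗ[ℝ] Y) Un)
    [Submodule.HasOrthogonalProjection Yn]
    (y : Y) (hy : y ∈ LinearMap.range (T : U →ₗ[ℝ] Y))
    (x₀ : U) (hx₀ : x₀ ∈ Un) (hTx₀ : T x₀ = (Submodule.orthogonalProjectionOnto Yn y : Y)) :
    (∀ x : U, ‖T x₀ - y‖ ≤ ‖T (Submodule.orthogonalProjectionOnto Un x : U) - y‖) ∧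
    (∀ x : U, ‖T (Submodule.orthogonalProjectionOnto Un x : U) - y‖ = ‖T x₀ - y‖ → ‖x₀‖ ≤ ‖x‖) :=
  moore_penrose_eq_Tinv_proj_general T hT Un Yn hYn y x₀ hTx₀
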